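/- Let X, Y be n×n complex matrices with Re(X) and Re(Y) positive definite, where Re(M) = (M+M*)/2. Then there exists an invertible matrix T and a unitary U such that U*T* Re(X) T U and U*T* Re(Y) T U are diagonal matrices summing to I, and δ²(X,Y) := log(|det(X*+Y)| / (sqrt(det(X*+X)) sqrt(det(Y*+Y)))) decomposes as δ_S²(D_x, D_y) + (1/2) log det(I + (S_y - S_x)²), where D_x, D_y are the diagonal real parts and S_x, S_y the (Hermitian) transformed imaginary parts. -/

import Mathlib

open Matrix
open scoped ComplexOrder

/-- Hermitian real part `(M + Mᴴ)/2`. -/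
noncomputable def matRe {n : ℕ} (M : Matrix (Fin n) (Fin n) ℂ) : Matrix (Fin n) (Fin n) ℂ :=
  (1 / 2 : ℂ) • (M + Mᴴ)

/-- Hermitian imaginary part `(M - Mᴴ)/(2i)`. -/
noncomputable def matIm {n : ℕ} (M : Matrix (Fin n) (Fin n) ℂ) : Matrix (Fin n) (Fin n) ℂ :=
  (-(Complex.I) / 2) • (M - Mᴴ)

/-- `δ²(X,Y) = log(|det(X*+Y)| / (√det(X*+X) √det(Y*+Y)))`. -/
noncomputable def delta2 {n : ℕ} (X Y : Matrix (Fin n) (Fin n) ℂ) : ℝ :=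
  Real.log (‖Matrix.det (Xᴴ + Y)‖ /
    (Real.sqrt ((Matrix.det (Xᴴ + X)).re) * Real.sqrt ((Matrix.det (Yᴴ + Y)).re)))

/-- Squared S-divergence of positive vectors (diagonal positive matrices). -/
noncomputable def deltaS2vec {n : ℕ} (dx dy : Fin n → ℝ) : ℝ :=
  Real.log ((∏ i, ((dx i + dy i) / 2)) / Real.sqrt ((∏ i, dx i) * ∏ i, dy i))

/-!
With `T = (Re X + Re Y)^(-1/2)` and `U` a unitary diagonalising `Tᴴ (Re X) T`, the congruence
`V = T U` turns `Re X` and `Re Y` into diagonal matrices `D_x` and `D_y = I - D_x`. The quantity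
`δ²` is invariant under congruence, since numerator and denominator both pick up `|det V|²`.
After the congruence `Xᴴ + Y = I + i (S_y - S_x)`, `Xᴴ + X = 2 D_x` and `Yᴴ + Y = 2 D_y`, and for
Hermitian `S` we have `|det (I + i S)|² = det ((I + i S) (I - i S)) = det (I + S²)`.
-/

namespace Matrix

variable {𝕜 ι : Type*} [RCLike 𝕜] [Fintype ι] [DecidableEq ι]

open MatrixOrder in
theorem PosDef.exists_isUnit_conjTranspose_mul_mul_eq_one {P : Matrix ι ι 𝕜} (hP : P.PosDef) :
    ∃ T : Matrix ι ι 𝕜, IsUnit T ∧ Tᴴ * P * T = 1 := by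
  set R := CFC.sqrt P
  have hR : R.IsHermitian := (CFC.sqrt_nonneg P).posSemidef.isHermitian
  have hRR : R * R = P := CFC.sqrt_mul_sqrt_self P hP.posSemidef.nonneg
  have hRdet : IsUnit R.det :=
    isUnit_of_mul_isUnit_left (by rw [← det_mul, hRR]; exact hP.det_pos.ne'.isUnit)
  refine ⟨R⁻¹, isUnit_nonsing_inv_iff.mpr ((isUnit_iff_isUnit_det R).mpr hRdet), ?_⟩
  rw [conjTranspose_nonsing_inv, hR.eq, ← hRR, ← Matrix.mul_assoc, nonsing_inv_mul R hRdet,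
    Matrix.one_mul, mul_nonsing_inv R hRdet]

theorem PosDef.exists_simultaneous_diagonalization {A B : Matrix ι ι 𝕜} (hA : A.PosDef)
    (hB : B.PosSemidef) :
    ∃ T : Matrix ι ι 𝕜, IsUnit T ∧ ∃ U ∈ unitaryGroup ι 𝕜, ∃ d : ι → ℝ,
      Uᴴ * Tᴴ * A * T * U = diagonal (fun i => (d i : 𝕜)) ∧
      Uᴴ * Tᴴ * B * T * U = diagonal (fun i => ((1 - d i : ℝ) : 𝕜)) := by
  obtain ⟨T, hT, hTAB⟩ := (hA.add_posSemidef hB).exists_isUnit_conjTranspose_mul_mul_eq_one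
  have hE : (Tᴴ * A * T).IsHermitian := isHermitian_conjTranspose_mul_mul T hA.1
  set U : Matrix ι ι 𝕜 := (hE.eigenvectorUnitary : Matrix ι ι 𝕜)
  have hUU : Uᴴ * U = 1 := Unitary.coe_star_mul_self hE.eigenvectorUnitary
  have hDA : Uᴴ * Tᴴ * A * T * U = diagonal (fun i => (hE.eigenvalues i : 𝕜)) := by
    rw [show Uᴴ * Tᴴ * A * T * U = Uᴴ * (Tᴴ * A * T) * U by simp only [Matrix.mul_assoc]]
    simpa [Function.comp_def, star_eq_conjTranspose] using hE.conjStarAlgAut_star_eigenvectorUnitary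
  refine ⟨T, hT, U, hE.eigenvectorUnitary.2, hE.eigenvalues, hDA, ?_⟩
  have hTB : Tᴴ * B * T = 1 - Tᴴ * A * T := by
    rw [eq_sub_iff_add_eq', ← hTAB, Matrix.mul_add, Matrix.add_mul]
  calc Uᴴ * Tᴴ * B * T * U = Uᴴ * (Tᴴ * B * T) * U := by simp only [Matrix.mul_assoc]
    _ = 1 - Uᴴ * Tᴴ * A * T * U := by
        rw [hTB, Matrix.mul_sub, Matrix.sub_mul, Matrix.mul_one, hUU]
        simp only [Matrix.mul_assoc]
    _ = _ := by
        rw [hDA, ← diagonal_one, diagonal_sub]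
        congr 1
        ext i
        push_cast
        rfl

theorem PosDef.pos_of_conjTranspose_mul_mul_eq_diagonal {A V : Matrix ι ι 𝕜} (hA : A.PosDef)
    (hV : IsUnit V) {e : ι → ℝ} (h : Vᴴ * A * V = diagonal (fun i => (e i : 𝕜))) (i : ι) :
    0 < e i := by
  have hVAV := hA.conjTranspose_mul_mul_same (mulVec_injective_iff_isUnit.mpr hV)
  rw [h, posDef_diagonal_iff] at hVAV
  exact_mod_cast hVAV i

theorem IsHermitian.posDef_one_add_sq {S : Matrix ι ι 𝕜} (hS : S.IsHermitian) :
    (1 + S ^ 2).PosDef := by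
  refine PosDef.one.add_posSemidef ?_
  rw [sq]
  nth_rewrite 1 [← hS.eq]
  exact posSemidef_conjTranspose_mul_self S

end Matrix

section Complex

variable {ι : Type*} [Fintype ι] [DecidableEq ι]

theorem det_conjTranspose_mul_mul (V M : Matrix ι ι ℂ) :
    (Vᴴ * M * V).det = Complex.normSq V.det * M.det := by
  rw [det_mul, det_mul, det_conjTranspose, Complex.normSq_eq_conj_mul_self, Complex.star_def]
  ring

theorem norm_det_one_add_I_smul_sq {S : Matrix ι ι ℂ} (hS : S.IsHermitian) :
    ‖(1 + Complex.I • S).det‖ ^ 2 = (1 + S ^ 2).det.re := by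
  have hconj : (1 + Complex.I • S)ᴴ = 1 - Complex.I • S := by
    rw [conjTranspose_add, conjTranspose_smul, conjTranspose_one, hS.eq, Complex.star_def,
      Complex.conj_I, neg_smul, sub_eq_add_neg]
  have hprod : (1 + Complex.I • S) * (1 - Complex.I • S) = 1 + S ^ 2 := by
    rw [mul_sub, add_mul, add_mul, smul_mul_smul_comm, Complex.I_mul_I, neg_one_smul, sq]
    simp only [Matrix.one_mul, Matrix.mul_one]
    abel
  rw [Complex.sq_norm, ← Complex.ofReal_re (Complex.normSq _), ← Complex.mul_conj,
    ← Complex.star_def, ← det_conjTranspose, hconj, ← det_mul, hprod]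

end Complex

section Delta

variable {n : ℕ}

theorem isHermitian_matIm (M : Matrix (Fin n) (Fin n) ℂ) : (matIm M).IsHermitian := by
  have : star (-Complex.I / 2) = -(-Complex.I / 2) := by simp [neg_div]
  rw [IsHermitian, matIm, conjTranspose_smul, conjTranspose_sub, conjTranspose_conjTranspose,
    this, neg_smul, ← smul_neg, neg_sub]

theorem matRe_conjTranspose_mul_mul (V M : Matrix (Fin n) (Fin n) ℂ) :
    matRe (Vᴴ * M * V) = Vᴴ * matRe M * V := by
  simp only [matRe, conjTranspose_mul, conjTranspose_conjTranspose, Matrix.mul_assoc,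
    Matrix.mul_add, Matrix.add_mul, Matrix.mul_smul, Matrix.smul_mul]

theorem matIm_conjTranspose_mul_mul (V M : Matrix (Fin n) (Fin n) ℂ) :
    matIm (Vᴴ * M * V) = Vᴴ * matIm M * V := by
  simp only [matIm, conjTranspose_mul, conjTranspose_conjTranspose, Matrix.mul_assoc,
    Matrix.mul_sub, Matrix.sub_mul, Matrix.mul_smul, Matrix.smul_mul]

theorem conjTranspose_add_eq (M N : Matrix (Fin n) (Fin n) ℂ) :
    Mᴴ + N = matRe M + matRe N + Complex.I • (matIm N - matIm M) := by
  have hI : Complex.I * (-Complex.I / 2) = 1 / 2 := by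
    rw [mul_div_assoc', mul_neg, Complex.I_mul_I]
    norm_num
  rw [matRe, matRe, matIm, matIm, ← smul_sub, smul_smul, hI]
  module

theorem conjTranspose_add_self (M : Matrix (Fin n) (Fin n) ℂ) : Mᴴ + M = (2 : ℂ) • matRe M := by
  rw [matRe]
  module

theorem re_det_conjTranspose_add_self_of_matRe_eq_diagonal {M : Matrix (Fin n) (Fin n) ℂ}
    {d : Fin n → ℝ} (hM : matRe M = diagonal (fun i => (d i : ℂ))) :
    (Mᴴ + M).det.re = ∏ i, 2 * d i := by
  rw [conjTranspose_add_self, hM, ← diagonal_smul, det_diagonal]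
  simp only [Pi.smul_apply, smul_eq_mul]
  norm_cast

theorem delta2_conjTranspose_mul_mul {V : Matrix (Fin n) (Fin n) ℂ} (hV : IsUnit V)
    (X Y : Matrix (Fin n) (Fin n) ℂ) : delta2 (Vᴴ * X * V) (Vᴴ * Y * V) = delta2 X Y := by
  have hc : 0 < Complex.normSq V.det :=
    Complex.normSq_pos.mpr ((isUnit_iff_isUnit_det V).mp hV).ne_zero
  have hcongr (M N : Matrix (Fin n) (Fin n) ℂ) :
      (Vᴴ * M * V)ᴴ + Vᴴ * N * V = Vᴴ * (Mᴴ + N) * V := by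
    simp only [conjTranspose_mul, conjTranspose_conjTranspose, Matrix.mul_add, Matrix.add_mul,
      Matrix.mul_assoc]
  simp only [delta2, hcongr, det_conjTranspose_mul_mul, norm_mul, Complex.norm_real,
    Real.norm_of_nonneg hc.le, Complex.re_ofReal_mul, Real.sqrt_mul hc.le]
  congr 1
  rw [mul_mul_mul_comm, Real.mul_self_sqrt hc.le, mul_div_mul_left _ _ hc.ne']

theorem deltaS2vec_eq_neg_log {dx dy : Fin n → ℝ} (hsum : ∀ i, dx i + dy i = 1)
    (hdx : ∀ i, 0 ≤ dx i) :
    deltaS2vec dx dy = -Real.log (√(∏ i, 2 * dx i) * √(∏ i, 2 * dy i)) := by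
  have hP : 0 ≤ ∏ i, 2 * dx i := Finset.prod_nonneg fun i _ => by linarith [hdx i]
  have h4 : (∏ i, 2 * dx i) * ∏ i, 2 * dy i = (2 ^ n) ^ 2 * ((∏ i, dx i) * ∏ i, dy i) := by
    simp only [Finset.prod_mul_distrib, Finset.prod_const, Finset.card_univ, Fintype.card_fin]
    ring
  rw [deltaS2vec, ← Real.log_inv, ← Real.sqrt_mul hP, h4, Real.sqrt_mul (sq_nonneg (2 ^ n : ℝ)),
    Real.sqrt_sq (by positivity)]
  simp only [hsum, Finset.prod_const, Finset.card_univ, Fintype.card_fin, div_eq_mul_inv,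
    one_mul, inv_pow, mul_inv]

theorem delta2_of_matRe_eq_diagonal {X Y : Matrix (Fin n) (Fin n) ℂ} {dx dy : Fin n → ℝ}
    (hX : matRe X = diagonal (fun i => (dx i : ℂ))) (hY : matRe Y = diagonal (fun i => (dy i : ℂ)))
    (hsum : ∀ i, dx i + dy i = 1) (hdx : ∀ i, 0 < dx i) (hdy : ∀ i, 0 < dy i) :
    delta2 X Y = deltaS2vec dx dy + (1 / 2) * Real.log ((1 + (matIm Y - matIm X) ^ 2).det.re) := by
  set S := matIm Y - matIm X
  have hS : S.IsHermitian := (isHermitian_matIm Y).sub (isHermitian_matIm X)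
  have hXY : Xᴴ + Y = 1 + Complex.I • S := by
    rw [conjTranspose_add_eq, hX, hY, diagonal_add, ← diagonal_one]
    congr 2
    ext i
    exact_mod_cast hsum i
  have hz : ‖(1 + Complex.I • S).det‖ ≠ 0 := by
    have h := (Complex.lt_def.mp hS.posDef_one_add_sq.det_pos).1
    rw [Complex.zero_re, ← norm_det_one_add_I_smul_sq hS] at h
    exact fun h0 => by rw [h0] at h; norm_num at h
  have hD : √(∏ i, 2 * dx i) * √(∏ i, 2 * dy i) ≠ 0 := by
    have hpos {d : Fin n → ℝ} (hd : ∀ i, 0 < d i) : 0 < √(∏ i, 2 * d i) :=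
      Real.sqrt_pos.mpr (Finset.prod_pos fun i _ => mul_pos two_pos (hd i))
    exact (mul_pos (hpos hdx) (hpos hdy)).ne'
  rw [deltaS2vec_eq_neg_log hsum fun i => (hdx i).le, ← norm_det_one_add_I_smul_sq hS,
    Real.log_pow, delta2, hXY, re_det_conjTranspose_add_self_of_matRe_eq_diagonal hX,
    re_det_conjTranspose_add_self_of_matRe_eq_diagonal hY, Real.log_div hz hD]
  push_cast
  ring

end Delta

/-- Decomposition of `δ²` for matrices with positive definite real part:
after a congruence `T` and a unitary `U`, the real parts become diagonal matrices
summing to `I`, and `δ²(X,Y)` splits as an S-divergence term plus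
`½ log det(I + (S_y - S_x)²)` for the transformed imaginary parts. -/
theorem delta2_decomposition {n : ℕ} (X Y : Matrix (Fin n) (Fin n) ℂ)
    (hX : (matRe X).PosDef) (hY : (matRe Y).PosDef) :
    ∃ T : Matrix (Fin n) (Fin n) ℂ, IsUnit T ∧
    ∃ U : Matrix (Fin n) (Fin n) ℂ, U ∈ Matrix.unitaryGroup (Fin n) ℂ ∧ ∃ dx dy : Fin n → ℝ,
      Uᴴ * Tᴴ * matRe X * T * U =
        Matrix.diagonal (fun i => (dx i : ℂ)) ∧
      Uᴴ * Tᴴ * matRe Y * T * U =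
        Matrix.diagonal (fun i => (dy i : ℂ)) ∧
      (∀ i, dx i + dy i = 1) ∧
      delta2 X Y = deltaS2vec dx dy +
        (1 / 2) * Real.log ((Matrix.det (1 +
          (Uᴴ * Tᴴ * matIm Y * T * U -
           Uᴴ * Tᴴ * matIm X * T * U) ^ 2)).re) := by
  obtain ⟨T, hT, U, hU, d, hDX, hDY⟩ := hX.exists_simultaneous_diagonalization hY.posSemidef
  have hV : IsUnit (T * U) := hT.mul (Unitary.isUnit_coe (U := ⟨U, hU⟩))
  have hconj (M : Matrix (Fin n) (Fin n) ℂ) : Uᴴ * Tᴴ * M * T * U = (T * U)ᴴ * M * (T * U) := by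
    simp only [conjTranspose_mul, Matrix.mul_assoc]
  have hsum (i : Fin n) : d i + (1 - d i) = 1 := add_sub_cancel _ _
  refine ⟨T, hT, U, hU, d, fun i => 1 - d i, hDX, hDY, hsum, ?_⟩
  rw [hconj] at hDX hDY
  rw [hconj, hconj, ← matIm_conjTranspose_mul_mul, ← matIm_conjTranspose_mul_mul,
    ← delta2_conjTranspose_mul_mul hV X Y]
  refine delta2_of_matRe_eq_diagonal ?_ ?_ hsum (hX.pos_of_conjTranspose_mul_mul_eq_diagonal hV hDX)
    (hY.pos_of_conjTranspose_mul_mul_eq_diagonal hV hDY) <;> rwa [matRe_conjTranspose_mul_mul]
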